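/- Let I be a finite nonempty index set, let w : I → ℝ with w_i > 0 and Σ_i w_i = 1, and let x, z ∈ ℝ^n. For each i ∈ I let s_i ∈ ℝ^n satisfy the cutter inequality ⟨s_i, z − x⟩ ≥ ‖s_i‖². Let g ∈ ℝ^n, g ≠ 0, ĝ = g/‖g‖, and suppose ⟨ĝ, s_i⟩ ≤ 0 for all i ∈ I and ⟨ĝ, z − x⟩ ≥ 0. Set p = Σ_i w_i·s_i and suppose p ≠ 0 and ⟨p/‖p‖, ĝ⟩ = −1 + ε for some ε ∈ (0, 1). Define d = p − ⟨p, ĝ⟩·ĝ and x^{SC} = x + (‖p‖²/‖d‖²)·d. Then ‖x^{SC} − z‖² ≤ ‖x − z‖² − (1/(2ε − ε²))·Σ_i w_i·‖s_i‖². -/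

import Mathlib

/-!
Write `σ = ∑ i, w i * ‖s i‖ ^ 2` and `λ = ‖p‖² / ‖d‖² = 1 / sin² α`. Summing the cutter
inequalities gives `σ ≤ ⟪p, z - x⟫`, and since `⟪p, ĝ⟫ ≤ 0 ≤ ⟪ĝ, z - x⟫` the projected direction
`d` does at least as well: `σ ≤ ⟪d, z - x⟫`. Convexity of `‖·‖²` gives `λ ‖d‖² = ‖p‖² ≤ σ`.
Expanding `‖x + λ d - z‖²` then shows a decrease of at least `2 λ σ - λ σ = λ σ`.
-/

open scoped RealInnerProductSpace

section
variable {E : Type*} [NormedAddCommGroup E] [InnerProductSpace ℝ E]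

lemma norm_sub_inner_smul_sq_of_norm_eq_one {u : E} (hu : ‖u‖ = 1) (v : E) :
    ‖v - ⟪v, u⟫ • u‖ ^ 2 = ‖v‖ ^ 2 - ⟪v, u⟫ ^ 2 := by
  rw [norm_sub_sq_real, real_inner_smul_right, norm_smul, hu, Real.norm_eq_abs, mul_one, sq_abs]
  ring

lemma norm_sum_smul_sq_le {ι : Type*} {t : Finset ι} {w : ι → ℝ} (hw : ∀ i ∈ t, 0 ≤ w i)
    (hsum : ∑ i ∈ t, w i = 1) (s : ι → E) :
    ‖∑ i ∈ t, w i • s i‖ ^ 2 ≤ ∑ i ∈ t, w i * ‖s i‖ ^ 2 :=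
  ((convexOn_univ_norm.pow (fun _ _ ↦ norm_nonneg _) 2).map_sum_le hw hsum
    fun _ _ ↦ Set.mem_univ _)

lemma sum_mul_norm_sq_le_inner_sum_smul {ι : Type*} {t : Finset ι} {w : ι → ℝ}
    (hw : ∀ i ∈ t, 0 ≤ w i) {s : ι → E} {y : E} (hcut : ∀ i ∈ t, ‖s i‖ ^ 2 ≤ ⟪s i, y⟫) :
    ∑ i ∈ t, w i * ‖s i‖ ^ 2 ≤ ⟪∑ i ∈ t, w i • s i, y⟫ := by
  rw [sum_inner]
  exact Finset.sum_le_sum fun i hi ↦ by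
    rw [real_inner_smul_left]; exact mul_le_mul_of_nonneg_left (hcut i hi) (hw i hi)

lemma norm_add_smul_sub_sq_le {x z d : E} {t σ : ℝ} (ht : 0 ≤ t) (hstep : t * ‖d‖ ^ 2 ≤ σ)
    (hσ : σ ≤ ⟪d, z - x⟫) : ‖x + t • d - z‖ ^ 2 ≤ ‖x - z‖ ^ 2 - t * σ := by
  have hexp : ‖x + t • d - z‖ ^ 2 = ‖x - z‖ ^ 2 - 2 * t * ⟪d, z - x⟫ + t * (t * ‖d‖ ^ 2) := by
    rw [show x + t • d - z = (x - z) + t • d by abel, norm_add_sq_real, real_inner_smul_right,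
      norm_smul, Real.norm_eq_abs, mul_pow, sq_abs, real_inner_comm, ← neg_sub z x, inner_neg_right,
      norm_neg]
    ring
  rw [hexp]
  nlinarith [mul_le_mul_of_nonneg_left hσ ht, mul_le_mul_of_nonneg_left hstep ht]

end

theorem surrogate_constraint_perturbation_fejer_general {n : ℕ} {ι : Type*}
    [Fintype ι]
    (w : ι → ℝ) (hw : ∀ i, 0 < w i) (hsum : ∑ i, w i = 1)
    (x z : EuclideanSpace ℝ (Fin n))
    (s : ι → EuclideanSpace ℝ (Fin n))
    (hcut : ∀ i, ⟪s i, z - x⟫ ≥ ‖s i‖ ^ 2)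
    (g : EuclideanSpace ℝ (Fin n)) (hg : g ≠ 0)
    (ghat : EuclideanSpace ℝ (Fin n)) (hghat : ghat = ‖g‖⁻¹ • g)
    (hz : 0 ≤ ⟪ghat, z - x⟫)
    (p : EuclideanSpace ℝ (Fin n)) (hp : p = ∑ i, w i • s i) (hpne : p ≠ 0)
    (ε : ℝ) (hε0 : 0 < ε) (hε1 : ε < 1)
    (hangle : ⟪‖p‖⁻¹ • p, ghat⟫ = -1 + ε)
    (d : EuclideanSpace ℝ (Fin n)) (hd : d = p - ⟪p, ghat⟫ • ghat)
    (xSC : EuclideanSpace ℝ (Fin n))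
    (hxSC : xSC = x + (‖p‖ ^ 2 / ‖d‖ ^ 2) • d) :
    ‖xSC - z‖ ^ 2 ≤ ‖x - z‖ ^ 2 - (1 / (2 * ε - ε ^ 2)) * ∑ i, w i * ‖s i‖ ^ 2 := by
  have hpnorm : 0 < ‖p‖ := norm_pos_iff.mpr hpne
  have hsin : 0 < 2 * ε - ε ^ 2 := by nlinarith
  have hpg : ⟪p, ghat⟫ = (-1 + ε) * ‖p‖ := by
    rw [← hangle, real_inner_smul_left]
    field_simp
  have hd2 : ‖d‖ ^ 2 = (2 * ε - ε ^ 2) * ‖p‖ ^ 2 := by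
    rw [hd, norm_sub_inner_smul_sq_of_norm_eq_one (hghat ▸ norm_smul_inv_norm hg), hpg]
    ring
  have hpS : ‖p‖ ^ 2 ≤ ∑ i, w i * ‖s i‖ ^ 2 :=
    hp ▸ norm_sum_smul_sq_le (fun i _ ↦ (hw i).le) hsum s
  have hpz : ∑ i, w i * ‖s i‖ ^ 2 ≤ ⟪p, z - x⟫ :=
    hp ▸ sum_mul_norm_sq_le_inner_sum_smul (fun i _ ↦ (hw i).le) fun i _ ↦ hcut i
  have hdz : ∑ i, w i * ‖s i‖ ^ 2 ≤ ⟪d, z - x⟫ := by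
    rw [hd, inner_sub_left, real_inner_smul_left, hpg]
    nlinarith [mul_nonneg (mul_nonneg (by linarith : 0 ≤ 1 - ε) hpnorm.le) hz]
  have hstep : ‖p‖ ^ 2 / ‖d‖ ^ 2 = 1 / (2 * ε - ε ^ 2) := by
    rw [hd2]; field_simp
  rw [hxSC, hstep]
  refine norm_add_smul_sub_sq_le (by positivity) ?_ hdz
  rwa [← hstep, div_mul_cancel₀ _ (by rw [hd2]; positivity)]

/-- convergence speed of the surrogate constraint perturbation:
with cutters `s i`, `z` in the surrogate half-space, all `s i` on the far side
(`⟪ĝ, s i⟫ ≤ 0`), `p = ∑ i, w i • s i ≠ 0` with `⟪p/‖p‖, ĝ⟫ = -1 + ε`,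
`d = p - ⟪p, ĝ⟫ • ĝ` and `x^SC = x + (‖p‖²/‖d‖²) • d`, one has
`‖x^SC - z‖² ≤ ‖x - z‖² - (1/(2ε - ε²)) ∑ i, w i ‖s i‖²`. -/
theorem surrogate_constraint_perturbation_fejer {n : ℕ} {ι : Type*}
    [Fintype ι] [Nonempty ι]
    (w : ι → ℝ) (hw : ∀ i, 0 < w i) (hsum : ∑ i, w i = 1)
    (x z : EuclideanSpace ℝ (Fin n))
    (s : ι → EuclideanSpace ℝ (Fin n))
    (hcut : ∀ i, ⟪s i, z - x⟫ ≥ ‖s i‖ ^ 2)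
    (g : EuclideanSpace ℝ (Fin n)) (hg : g ≠ 0)
    (ghat : EuclideanSpace ℝ (Fin n)) (hghat : ghat = ‖g‖⁻¹ • g)
    (hsg : ∀ i, ⟪ghat, s i⟫ ≤ 0)
    (hz : 0 ≤ ⟪ghat, z - x⟫)
    (p : EuclideanSpace ℝ (Fin n)) (hp : p = ∑ i, w i • s i) (hpne : p ≠ 0)
    (ε : ℝ) (hε0 : 0 < ε) (hε1 : ε < 1)
    (hangle : ⟪‖p‖⁻¹ • p, ghat⟫ = -1 + ε)
    (d : EuclideanSpace ℝ (Fin n)) (hd : d = p - ⟪p, ghat⟫ • ghat)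
    (xSC : EuclideanSpace ℝ (Fin n))
    (hxSC : xSC = x + (‖p‖ ^ 2 / ‖d‖ ^ 2) • d) :
    ‖xSC - z‖ ^ 2 ≤ ‖x - z‖ ^ 2 - (1 / (2 * ε - ε ^ 2)) * ∑ i, w i * ‖s i‖ ^ 2 :=
  surrogate_constraint_perturbation_fejer_general w hw hsum x z s hcut g hg ghat hghat hz p hp hpne
    ε hε0 hε1 hangle d hd xSC hxSC
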